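/- arXiv:2306.13245 — 2 statements merged into one kernel-verified Lean document; each statement's English description precedes it below -/
import Mathlib

section
/- Let f = (f11, f12, f22) ∈ C²_c(S²; D1). If Lf(x) = 0, Tf(x) = 0, and Mf(x) = 0 for all x ∈ ℝ², then f11 ≡ f12 ≡ f22 ≡ 0. (A symmetric 2-tensor field is uniquely determined by its longitudinal, transverse, and mixed V-line transforms.) -/
noncomputable section

open MeasureTheory

/-- The divergent beam transform `X_w h (x) = ∫₀^∞ h(x + t w) dt`. -/
def Xbeam (w : ℝ × ℝ) (h : ℝ × ℝ → ℝ) (x : ℝ × ℝ) : ℝ :=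
  ∫ t in Set.Ioi (0 : ℝ), h (x + t • w)

/-- The k-th moment divergent beam transform `X_w^k h (x) = ∫₀^∞ t^k h(x + t w) dt`. -/
def Xmom (k : ℕ) (w : ℝ × ℝ) (h : ℝ × ℝ → ℝ) (x : ℝ × ℝ) : ℝ :=
  ∫ t in Set.Ioi (0 : ℝ), t ^ k * h (x + t • w)

/-- The directional derivative `D_w h = w ⋅ ∇h`. -/
def Dir (w : ℝ × ℝ) (h : ℝ × ℝ → ℝ) (x : ℝ × ℝ) : ℝ :=
  fderiv ℝ h x w

/-- Support contained in the open unit disc `D1`. -/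
def SuppInDisc (h : ℝ × ℝ → ℝ) : Prop :=
  ∀ x : ℝ × ℝ, 1 ≤ x.1 ^ 2 + x.2 ^ 2 → h x = 0

/-- The longitudinal V-line transform. -/
def VlineL (u1 u2 : ℝ) (f11 f12 f22 : ℝ × ℝ → ℝ) : ℝ × ℝ → ℝ :=
  Xbeam (u1, u2) (fun y => u1 ^ 2 * f11 y + 2 * u1 * u2 * f12 y + u2 ^ 2 * f22 y)
    + Xbeam (-u1, u2) (fun y => u1 ^ 2 * f11 y - 2 * u1 * u2 * f12 y + u2 ^ 2 * f22 y)

/-- The transverse V-line transform. -/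
def VlineT (u1 u2 : ℝ) (f11 f12 f22 : ℝ × ℝ → ℝ) : ℝ × ℝ → ℝ :=
  Xbeam (u1, u2) (fun y => u2 ^ 2 * f11 y - 2 * u1 * u2 * f12 y + u1 ^ 2 * f22 y)
    + Xbeam (-u1, u2) (fun y => u2 ^ 2 * f11 y + 2 * u1 * u2 * f12 y + u1 ^ 2 * f22 y)

/-- The mixed V-line transform. -/
def VlineM (u1 u2 : ℝ) (f11 f12 f22 : ℝ × ℝ → ℝ) : ℝ × ℝ → ℝ :=
  Xbeam (u1, u2) (fun y => -(u1 * u2) * f11 y + (u1 ^ 2 - u2 ^ 2) * f12 y + u1 * u2 * f22 y)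
    + Xbeam (-u1, u2) (fun y => u1 * u2 * f11 y + (u1 ^ 2 - u2 ^ 2) * f12 y - u1 * u2 * f22 y)

/-- The k-th moment longitudinal V-line transform. -/
def VlineLk (k : ℕ) (u1 u2 : ℝ) (f11 f12 f22 : ℝ × ℝ → ℝ) : ℝ × ℝ → ℝ :=
  Xmom k (u1, u2) (fun y => u1 ^ 2 * f11 y + 2 * u1 * u2 * f12 y + u2 ^ 2 * f22 y)
    + Xmom k (-u1, u2) (fun y => u1 ^ 2 * f11 y - 2 * u1 * u2 * f12 y + u2 ^ 2 * f22 y)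

/-- The k-th moment transverse V-line transform. -/
def VlineTk (k : ℕ) (u1 u2 : ℝ) (f11 f12 f22 : ℝ × ℝ → ℝ) : ℝ × ℝ → ℝ :=
  Xmom k (u1, u2) (fun y => u2 ^ 2 * f11 y - 2 * u1 * u2 * f12 y + u1 ^ 2 * f22 y)
    + Xmom k (-u1, u2) (fun y => u2 ^ 2 * f11 y + 2 * u1 * u2 * f12 y + u1 ^ 2 * f22 y)

/-- The k-th moment mixed V-line transform. -/
def VlineMk (k : ℕ) (u1 u2 : ℝ) (f11 f12 f22 : ℝ × ℝ → ℝ) : ℝ × ℝ → ℝ :=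
  Xmom k (u1, u2) (fun y => -(u1 * u2) * f11 y + (u1 ^ 2 - u2 ^ 2) * f12 y + u1 * u2 * f22 y)
    + Xmom k (-u1, u2) (fun y => u1 * u2 * f11 y + (u1 ^ 2 - u2 ^ 2) * f12 y - u1 * u2 * f22 y)

/-!
Differentiating `X_u P + X_v Q = 0` along `u` and using `D_w (X_w h) = -h` gives
`P = X_v (D_u Q)`; differentiating this along `v` gives the local relation `D_v P + D_u Q = 0`.
For the three V-line transforms these relations say that `f11 + f22` is constant in the vertical
direction, hence zero by compact support, and that `(f11, f12)` solves the anisotropic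
Cauchy–Riemann system `2u1² ∂₁f12 = (u1² - u2²) ∂₂f11`, `2u1² ∂₁f11 = -(u1² - u2²) ∂₂f12`.
After a linear change of variables `f11 + i f12` is an entire function with compact support,
so it vanishes by Liouville's theorem; when `u1 = u2` the system says directly that both
components are constant in the horizontal direction.
-/

open Filter Topology Set

theorem Bornology.IsBounded.exists_forall_add_smul_notMem {E : Type*} [NormedAddCommGroup E]
    [NormedSpace ℝ E] {K : Set E} (hK : Bornology.IsBounded K) {w : E} (hw : w ≠ 0) (r : ℝ) :
    ∃ T ≥ (0 : ℝ), ∀ y : E, ‖y‖ ≤ r → ∀ t ≥ T, y + t • w ∉ K := by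
  obtain ⟨R, hR⟩ := hK.subset_closedBall 0
  have hw' : 0 < ‖w‖ := norm_pos_iff.mpr hw
  refine ⟨(|R| + |r| + 1) / ‖w‖, by positivity, fun y hy t ht hyt => ?_⟩
  have hle : ‖y + t • w‖ ≤ R := by simpa using hR hyt
  have hT : |R| + |r| + 1 ≤ t * ‖w‖ := (div_le_iff₀ hw').mp ht
  have htw : t * ‖w‖ ≤ ‖y + t • w‖ + ‖y‖ :=
    calc t * ‖w‖ ≤ ‖t • w‖ := by rw [norm_smul, Real.norm_eq_abs]; gcongr; exact le_abs_self t
      _ = ‖(y + t • w) - y‖ := by rw [add_sub_cancel_left]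
      _ ≤ ‖y + t • w‖ + ‖y‖ := norm_sub_le _ _
  linarith [le_abs_self R, le_abs_self r]

theorem SuppInDisc.hasCompactSupport {h : ℝ × ℝ → ℝ} (hs : SuppInDisc h) :
    HasCompactSupport h := by
  refine HasCompactSupport.intro (isCompact_closedBall (0 : ℝ × ℝ) 1) fun x hx => hs x ?_
  rw [Metric.mem_closedBall, dist_zero_right, not_le, Prod.norm_def, lt_max_iff,
    Real.norm_eq_abs, Real.norm_eq_abs] at hx
  rcases hx with hx | hx <;> nlinarith [abs_mul_abs_self x.1, abs_mul_abs_self x.2]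

theorem hasDerivAt_comp_add_smul {h : ℝ × ℝ → ℝ} {x w : ℝ × ℝ} {s : ℝ}
    (hh : DifferentiableAt ℝ h (x + s • w)) :
    HasDerivAt (fun s : ℝ => h (x + s • w)) (Dir w h (x + s • w)) s := by
  have hline : HasDerivAt (fun s : ℝ => x + s • w) w s := by
    simpa using ((hasDerivAt_id s).smul_const w).const_add x
  exact hh.hasFDerivAt.comp_hasDerivAt s hline

theorem ContDiff.continuous_dir {h : ℝ × ℝ → ℝ} (hh : ContDiff ℝ 1 h) (w : ℝ × ℝ) :
    Continuous (Dir w h) :=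
  (hh.continuous_fderiv one_ne_zero).clm_apply continuous_const

theorem HasCompactSupport.dir {h : ℝ × ℝ → ℝ} (hs : HasCompactSupport h) (w : ℝ × ℝ) :
    HasCompactSupport (Dir w h) :=
  hs.fderiv_apply ℝ w

theorem dir_prod_mk (w₁ w₂ : ℝ) (h : ℝ × ℝ → ℝ) (x : ℝ × ℝ) :
    Dir (w₁, w₂) h x = w₁ * Dir (1, 0) h x + w₂ * Dir (0, 1) h x := by
  have hw : ((w₁, w₂) : ℝ × ℝ) = w₁ • (1, 0) + w₂ • (0, 1) := by ext <;> simp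
  rw [Dir, hw, map_add, map_smul, map_smul, smul_eq_mul, smul_eq_mul, Dir, Dir]

theorem dir_add {f g : ℝ × ℝ → ℝ} {x : ℝ × ℝ} (hf : DifferentiableAt ℝ f x)
    (hg : DifferentiableAt ℝ g x) (w : ℝ × ℝ) :
    Dir w (fun y => f y + g y) x = Dir w f x + Dir w g x := by
  simp [Dir, fderiv_fun_add hf hg]

theorem dir_const_mul {f : ℝ × ℝ → ℝ} {x : ℝ × ℝ} (hf : DifferentiableAt ℝ f x) (c : ℝ)
    (w : ℝ × ℝ) : Dir w (fun y => c * f y) x = c * Dir w f x := by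
  simp [Dir, fderiv_const_mul hf]

theorem dir_eq_neg_of_add_eq_zero {f g : ℝ × ℝ → ℝ} (h : ∀ x, f x + g x = 0) (w x : ℝ × ℝ) :
    Dir w g x = -Dir w f x := by
  rw [show g = fun y => -f y from funext fun y => (neg_eq_of_add_eq_zero_right (h y)).symm, Dir,
    fderiv_fun_neg]
  rfl

theorem xbeam_eq_intervalIntegral {h : ℝ × ℝ → ℝ} {w y : ℝ × ℝ} {T : ℝ} (hT : 0 ≤ T)
    (hzero : ∀ t ≥ T, h (y + t • w) = 0) :
    Xbeam w h y = ∫ t in 0..T, h (y + t • w) := by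
  rw [intervalIntegral.integral_of_le hT, Xbeam,
    setIntegral_eq_of_subset_of_forall_sdiff_eq_zero measurableSet_Ioi Ioc_subset_Ioi_self]
  rintro t ⟨ht, htT⟩
  exact hzero t (le_of_lt (not_le.mp fun h => htT ⟨ht, h⟩))

theorem hasDerivAt_xbeam_add_smul_self {h : ℝ × ℝ → ℝ} (hc : Continuous h)
    (hs : HasCompactSupport h) {w : ℝ × ℝ} (hw : w ≠ 0) (x : ℝ × ℝ) :
    HasDerivAt (fun s : ℝ => Xbeam w h (x + s • w)) (-h x) 0 := by
  obtain ⟨T, hT0, hT⟩ := hs.isCompact.isBounded.exists_forall_add_smul_notMem hw ‖x‖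
  have hray : Continuous fun t : ℝ => h (x + t • w) := by fun_prop
  have heq : (fun s : ℝ => ∫ t in s..T + 1, h (x + t • w)) =ᶠ[𝓝 0]
      fun s => Xbeam w h (x + s • w) := by
    filter_upwards [eventually_lt_nhds (show (0 : ℝ) < T + 1 by linarith)] with s hs
    have hshift : ∀ t : ℝ, x + s • w + t • w = x + (t + s) • w := fun t => by
      rw [add_smul, add_assoc, add_comm (s • w)]
    rw [xbeam_eq_intervalIntegral (T := T + 1 - s) (by linarith) fun t ht => by
        rw [hshift]
        exact image_eq_zero_of_notMem_tsupport (hT x le_rfl _ (by linarith))]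
    simp_rw [hshift]
    rw [intervalIntegral.integral_comp_add_right
        (fun t => h (x + t • w)) s, zero_add, sub_add_cancel]
  have hderiv := intervalIntegral.integral_hasDerivAt_left (hray.intervalIntegrable 0 (T + 1))
    (hray.stronglyMeasurableAtFilter _ _) hray.continuousAt
  simpa using hderiv.congr_of_eventuallyEq heq.symm

theorem hasDerivAt_xbeam_add_smul {h : ℝ × ℝ → ℝ} (hh : ContDiff ℝ 1 h)
    (hs : HasCompactSupport h) {w : ℝ × ℝ} (hw : w ≠ 0) (w' x : ℝ × ℝ) :
    HasDerivAt (fun s : ℝ => Xbeam w h (x + s • w')) (Xbeam w (Dir w' h) x) 0 := by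
  obtain ⟨T, hT0, hT⟩ := hs.isCompact.isBounded.exists_forall_add_smul_notMem hw (‖x‖ + ‖w'‖)
  obtain ⟨C, hC⟩ := (hh.continuous_dir w').bounded_above_of_compact_support (hs.dir w')
  have hnear : ∀ s ∈ Metric.ball (0 : ℝ) 1, ‖x + s • w'‖ ≤ ‖x‖ + ‖w'‖ := fun s hs => by
    rw [mem_ball_zero_iff, Real.norm_eq_abs] at hs
    calc ‖x + s • w'‖ ≤ ‖x‖ + |s| * ‖w'‖ := by
          simpa [norm_smul] using norm_add_le x (s • w')
      _ ≤ ‖x‖ + ‖w'‖ := by gcongr; nlinarith [norm_nonneg w']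
  have heq : (fun s : ℝ => ∫ t in 0..T, h (x + t • w + s • w')) =ᶠ[𝓝 0]
      fun s => Xbeam w h (x + s • w') := by
    filter_upwards [Metric.ball_mem_nhds (0 : ℝ) one_pos] with s hs
    rw [xbeam_eq_intervalIntegral hT0 fun t ht =>
      image_eq_zero_of_notMem_tsupport (hT _ (hnear s hs) t ht)]
    simp only [add_right_comm x (s • w')]
  have hval : Xbeam w (Dir w' h) x = ∫ t in 0..T, Dir w' h (x + t • w) :=
    xbeam_eq_intervalIntegral hT0 fun t ht => by
      rw [Dir, fderiv_of_notMem_tsupport ℝ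
        (hT x (le_add_of_nonneg_right (norm_nonneg w')) t ht), zero_apply]
  have hcont : Continuous fun p : ℝ × ℝ => h (x + p.2 • w + p.1 • w') := by fun_prop
  have hcont' : Continuous fun p : ℝ × ℝ => Dir w' h (x + p.2 • w + p.1 • w') :=
    (hh.continuous_dir w').comp (by fun_prop)
  have hderiv := intervalIntegral.hasDerivAt_integral_of_dominated_loc_of_deriv_le
    (F := fun s t => h (x + t • w + s • w')) (F' := fun s t => Dir w' h (x + t • w + s • w'))
    (x₀ := 0) (μ := volume) (bound := fun _ => C) (Metric.ball_mem_nhds 0 one_pos)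
    (Eventually.of_forall fun s =>
      (hcont.comp (Continuous.prodMk_right s)).aestronglyMeasurable)
    ((hcont.comp (Continuous.prodMk_right 0)).intervalIntegrable 0 T)
    (hcont'.comp (Continuous.prodMk_right 0)).aestronglyMeasurable
    (ae_of_all _ fun _ _ _ _ => hC _) intervalIntegrable_const
    (ae_of_all _ fun t _ s _ => hasDerivAt_comp_add_smul (hh.differentiable one_ne_zero _))
  rw [hval]
  simpa using hderiv.2.congr_of_eventuallyEq heq.symm

theorem dir_add_dir_eq_zero_of_xbeam_add_xbeam_eq_zero {P Q : ℝ × ℝ → ℝ}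
    (hP : ContDiff ℝ 1 P) (hQ : ContDiff ℝ 1 Q) (sP : HasCompactSupport P)
    (sQ : HasCompactSupport Q) {u v : ℝ × ℝ} (hu : u ≠ 0) (hv : v ≠ 0)
    (hvan : ∀ x, Xbeam u P x + Xbeam v Q x = 0) (x : ℝ × ℝ) :
    Dir v P x + Dir u Q x = 0 := by
  have hP_eq : ∀ y, P y = Xbeam v (Dir u Q) y := fun y => by
    have hsum := (hasDerivAt_xbeam_add_smul_self hP.continuous sP hu y).fun_add
      (hasDerivAt_xbeam_add_smul hQ sQ hv u y)
    simp only [hvan] at hsum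
    linarith [hsum.unique (hasDerivAt_const 0 0)]
  have hP_line := hasDerivAt_comp_add_smul (x := x) (w := v) (s := 0)
    (hP.differentiable one_ne_zero _)
  simp_rw [hP_eq] at hP_line
  have hQ_line := hasDerivAt_xbeam_add_smul_self (hQ.continuous_dir u) (sQ.dir u) hv x
  simp only [zero_smul, add_zero] at hP_line
  linarith [hP_line.unique hQ_line]

theorem eq_zero_of_dir_eq_zero {h : ℝ × ℝ → ℝ} (hh : Differentiable ℝ h)
    (hs : HasCompactSupport h) {w : ℝ × ℝ} (hw : w ≠ 0) (hdir : ∀ x, Dir w h x = 0)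
    (x : ℝ × ℝ) : h x = 0 := by
  obtain ⟨T, -, hT⟩ := hs.isCompact.isBounded.exists_forall_add_smul_notMem hw ‖x‖
  have hline (t : ℝ) := hasDerivAt_comp_add_smul (x := x) (w := w) (s := t) (hh _)
  have hconst := is_const_of_deriv_eq_zero (fun t => (hline t).differentiableAt)
    (fun t => by rw [(hline t).deriv, hdir]) 0 T
  simpa [image_eq_zero_of_notMem_tsupport (hT x le_rfl T le_rfl)] using hconst

theorem eq_zero_of_cauchyRiemann {g p : ℝ × ℝ → ℝ} (hg : Differentiable ℝ g)
    (hp : Differentiable ℝ p) (sg : HasCompactSupport g) (sp : HasCompactSupport p)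
    {a b : ℝ} (ha : a ≠ 0)
    (h₁ : ∀ x, a * Dir (1, 0) p x = b * Dir (0, 1) g x)
    (h₂ : ∀ x, a * Dir (1, 0) g x = -(b * Dir (0, 1) p x)) (x : ℝ × ℝ) :
    g x = 0 ∧ p x = 0 := by
  rcases eq_or_ne b 0 with rfl | hb
  · simp only [zero_mul, neg_zero, mul_eq_zero, ha, false_or] at h₁ h₂
    exact ⟨eq_zero_of_dir_eq_zero hg sg (by simp) h₂ x, eq_zero_of_dir_eq_zero hp sp (by simp) h₁ x⟩
  let φ : ℂ →L[ℝ] ℝ × ℝ := (a • Complex.reCLM).prod ((-b) • Complex.imCLM)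
  have hφ (z : ℂ) : φ z = (a * z.re, -b * z.im) := rfl
  have hφ_emb : IsClosedEmbedding φ :=
    LinearMap.isClosedEmbedding_of_injective (f := φ.toLinearMap) <| LinearMap.ker_eq_bot.mpr
      fun z z' h => by
        simp only [ContinuousLinearMap.coe_coe, hφ, Prod.mk.injEq, mul_right_inj' ha,
          mul_right_inj' (neg_ne_zero.mpr hb)] at h
        exact Complex.ext h.1 h.2
  let F : ℂ → ℂ := fun z => g (φ z) + p (φ z) * Complex.I
  have hF : Differentiable ℂ F := fun z => by
    have hF' : HasFDerivAt F _ z :=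
      (Complex.ofRealCLM.hasFDerivAt.comp z ((hg _).hasFDerivAt.comp z φ.hasFDerivAt)).fun_add
        ((Complex.ofRealCLM.hasFDerivAt.comp z ((hp _).hasFDerivAt.comp z
          φ.hasFDerivAt)).mul_const Complex.I)
    refine differentiableAt_complex_iff_differentiableAt_real.mpr ⟨hF'.differentiableAt, ?_⟩
    rw [hF'.fderiv]
    have e₁ : φ 1 = (a, 0) := by simp [hφ]
    have e₂ : φ Complex.I = (0, -b) := by simp [hφ]
    simp only [add_apply, ContinuousLinearMap.coe_comp, Function.comp_apply,
      e₁, e₂, FunLike.coe_smul, Pi.smul_apply, Complex.ofRealCLM_apply, smul_eq_mul]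
    change ((Dir (0, -b) g (φ z) : ℝ) : ℂ) + Complex.I * (Dir (0, -b) p (φ z) : ℝ) =
      Complex.I * ((Dir (a, 0) g (φ z) : ℝ) + Complex.I * (Dir (a, 0) p (φ z) : ℝ))
    rw [dir_prod_mk 0 (-b), dir_prod_mk 0 (-b), dir_prod_mk a 0, dir_prod_mk a 0]
    apply Complex.ext <;> simp <;> linarith [h₁ (φ z), h₂ (φ z)]
  have sF : HasCompactSupport F :=
    ((sg.comp_isClosedEmbedding hφ_emb).comp_left Complex.ofReal_zero).add
      (((sp.comp_isClosedEmbedding hφ_emb).comp_left Complex.ofReal_zero).mul_right)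
  set z : ℂ := (x.1 / a : ℝ) + (-(x.2 / b) : ℝ) * Complex.I
  have hz : φ z = x := by
    rw [hφ]; ext <;> simp [z] <;> field_simp
  have hFz := hF.apply_eq_of_tendsto_cocompact z sF.is_zero_at_infty
  simp only [F, hz] at hFz
  simpa [Complex.ext_iff] using hFz

theorem vline_pde_of_eq_zero {u1 u2 : ℝ} (hu2 : u2 ≠ 0) {f11 f12 f22 : ℝ × ℝ → ℝ}
    (h11 : ContDiff ℝ 1 f11) (h12 : ContDiff ℝ 1 f12) (h22 : ContDiff ℝ 1 f22)
    (s11 : HasCompactSupport f11) (s12 : HasCompactSupport f12) (s22 : HasCompactSupport f22)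
    (a₁ a₂ a₃ b₁ b₂ b₃ : ℝ)
    (hvan : ∀ x, Xbeam (u1, u2) (fun y => a₁ * f11 y + a₂ * f12 y + a₃ * f22 y) x
      + Xbeam (-u1, u2) (fun y => b₁ * f11 y + b₂ * f12 y + b₃ * f22 y) x = 0) (x : ℝ × ℝ) :
    u1 * ((b₁ - a₁) * Dir (1, 0) f11 x + (b₂ - a₂) * Dir (1, 0) f12 x
        + (b₃ - a₃) * Dir (1, 0) f22 x)
      + u2 * ((a₁ + b₁) * Dir (0, 1) f11 x + (a₂ + b₂) * Dir (0, 1) f12 x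
        + (a₃ + b₃) * Dir (0, 1) f22 x) = 0 := by
  have hcomb (c₁ c₂ c₃ : ℝ) : HasCompactSupport fun y => c₁ * f11 y + c₂ * f12 y + c₃ * f22 y :=
    ((s11.mul_left (f := fun _ => c₁)).add (s12.mul_left (f := fun _ => c₂))).add
      (s22.mul_left (f := fun _ => c₃))
  have key := dir_add_dir_eq_zero_of_xbeam_add_xbeam_eq_zero (by fun_prop) (by fun_prop)
    (hcomb a₁ a₂ a₃) (hcomb b₁ b₂ b₃) (by simp [hu2]) (by simp [hu2]) hvan x
  have d11 := h11.differentiable one_ne_zero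
  have d12 := h12.differentiable one_ne_zero
  have d22 := h22.differentiable one_ne_zero
  simp (disch := fun_prop) only [dir_add, dir_const_mul, dir_prod_mk u1 u2,
    dir_prod_mk (-u1) u2] at key
  linear_combination key

theorem eq_zero_of_vline_pdes {u1 u2 : ℝ} (hu : u1 ^ 2 + u2 ^ 2 = 1) (hu1 : u1 ≠ 0)
    {f11 f12 f22 : ℝ × ℝ → ℝ} (d11 : Differentiable ℝ f11) (d12 : Differentiable ℝ f12)
    (d22 : Differentiable ℝ f22) (s11 : HasCompactSupport f11) (s12 : HasCompactSupport f12)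
    (s22 : HasCompactSupport f22)
    (pdeL : ∀ x, -2 * u1 ^ 2 * Dir (1, 0) f12 x + u1 ^ 2 * Dir (0, 1) f11 x
      + u2 ^ 2 * Dir (0, 1) f22 x = 0)
    (pdeT : ∀ x, 2 * u1 ^ 2 * Dir (1, 0) f12 x + u2 ^ 2 * Dir (0, 1) f11 x
      + u1 ^ 2 * Dir (0, 1) f22 x = 0)
    (pdeM : ∀ x, u1 ^ 2 * (Dir (1, 0) f11 x - Dir (1, 0) f22 x)
      + (u1 ^ 2 - u2 ^ 2) * Dir (0, 1) f12 x = 0) (x : ℝ × ℝ) :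
    f11 x = 0 ∧ f12 x = 0 ∧ f22 x = 0 := by
  have htrace : ∀ x, f11 x + f22 x = 0 :=
    eq_zero_of_dir_eq_zero (d11.add d22) (s11.add s22) (w := (0, 1)) (by simp) fun x => by
      rw [dir_add (d11 x) (d22 x)]
      linear_combination pdeL x + pdeT x - (Dir (0, 1) f11 x + Dir (0, 1) f22 x) * hu
  have hdtrace := dir_eq_neg_of_add_eq_zero htrace
  obtain ⟨h11, h12⟩ := eq_zero_of_cauchyRiemann d11 d12 s11 s12 (a := 2 * u1 ^ 2)
    (b := u1 ^ 2 - u2 ^ 2) (by positivity)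
    (fun x => by linear_combination -pdeL x + u2 ^ 2 * hdtrace (0, 1) x)
    (fun x => by linear_combination pdeM x + u1 ^ 2 * hdtrace (1, 0) x) x
  exact ⟨h11, h12, by linarith [htrace x]⟩

/-- a symmetric 2-tensor field is uniquely determined by its
longitudinal, transverse, and mixed V-line transforms. -/
theorem injectivity_L_T_M
    (u1 u2 : ℝ) (hu : u1 ^ 2 + u2 ^ 2 = 1) (hu1 : 0 < u1) (hu2 : 0 < u2)
    (f11 f12 f22 : ℝ × ℝ → ℝ)
    (h11 : ContDiff ℝ 2 f11) (h12 : ContDiff ℝ 2 f12) (h22 : ContDiff ℝ 2 f22)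
    (s11 : SuppInDisc f11) (s12 : SuppInDisc f12) (s22 : SuppInDisc f22)
    (hL : ∀ x : ℝ × ℝ, VlineL u1 u2 f11 f12 f22 x = 0)
    (hT : ∀ x : ℝ × ℝ, VlineT u1 u2 f11 f12 f22 x = 0)
    (hM : ∀ x : ℝ × ℝ, VlineM u1 u2 f11 f12 f22 x = 0) :
    ∀ x : ℝ × ℝ, f11 x = 0 ∧ f12 x = 0 ∧ f22 x = 0 := by
  replace h11 : ContDiff ℝ 1 f11 := h11.of_le (by norm_num)
  replace h12 : ContDiff ℝ 1 f12 := h12.of_le (by norm_num)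
  replace h22 : ContDiff ℝ 1 f22 := h22.of_le (by norm_num)
  have pde := vline_pde_of_eq_zero (u1 := u1) hu2.ne' h11 h12 h22 s11.hasCompactSupport
    s12.hasCompactSupport s22.hasCompactSupport
  have pdeL := pde (u1 ^ 2) (2 * u1 * u2) (u2 ^ 2) (u1 ^ 2) (-(2 * u1 * u2)) (u2 ^ 2)
    fun x => by rw [← hL x, VlineL, Pi.add_apply]; ring_nf
  have pdeT := pde (u2 ^ 2) (-(2 * u1 * u2)) (u1 ^ 2) (u2 ^ 2) (2 * u1 * u2) (u1 ^ 2)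
    fun x => by rw [← hT x, VlineT, Pi.add_apply]; ring_nf
  have pdeM := pde (-(u1 * u2)) (u1 ^ 2 - u2 ^ 2) (u1 * u2) (u1 * u2) (u1 ^ 2 - u2 ^ 2)
    (-(u1 * u2)) fun x => by rw [← hM x, VlineM, Pi.add_apply]; ring_nf
  have h2u2 : 2 * u2 ≠ 0 := by positivity
  exact eq_zero_of_vline_pdes hu hu1.ne' (h11.differentiable one_ne_zero)
    (h12.differentiable one_ne_zero) (h22.differentiable one_ne_zero) s11.hasCompactSupport
    s12.hasCompactSupport s22.hasCompactSupport
    (fun x => mul_left_cancel₀ h2u2 <| by linear_combination pdeL x)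
    (fun x => mul_left_cancel₀ h2u2 <| by linear_combination pdeT x)
    (fun x => mul_left_cancel₀ h2u2 <| by linear_combination pdeM x)
end
end

section
/- Let φ : ℝ² → ℝ be any twice continuously differentiable compactly supported function, and define the symmetric 2-tensor field f = (f11, f12, f22) = (u2² φ, 0, −u1² φ). Then Lᵏ f(x) = 0 for every x ∈ ℝ² and every integer k ≥ 0. In particular, if φ is not identically zero, then f is a nonzero symmetric 2-tensor field annihilated simultaneously by all moment longitudinal V-line transforms, so the collection {Lᵏ}_{k≥0} does not determine a symmetric 2-tensor field. -/
noncomputable section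

open MeasureTheory

/-- the tensor field `(u2² φ, 0, −u1² φ)` is annihilated by all the
moment longitudinal V-line transforms, hence the collection `{Lᵏ}` is not injective. -/
theorem moments_not_injective
    (u1 u2 : ℝ) (hu : u1 ^ 2 + u2 ^ 2 = 1) (hu1 : 0 < u1) (hu2 : 0 < u2)
    (φ : ℝ × ℝ → ℝ) (hφ : ContDiff ℝ 2 φ) (hc : HasCompactSupport φ)
    (f11 f12 f22 : ℝ × ℝ → ℝ)
    (hf11 : ∀ y : ℝ × ℝ, f11 y = u2 ^ 2 * φ y)
    (hf12 : ∀ y : ℝ × ℝ, f12 y = 0)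
    (hf22 : ∀ y : ℝ × ℝ, f22 y = -(u1 ^ 2) * φ y) :
    (∀ (k : ℕ) (x : ℝ × ℝ), VlineLk k u1 u2 f11 f12 f22 x = 0) ∧
      ((∃ x : ℝ × ℝ, φ x ≠ 0) →
        ∃ x : ℝ × ℝ, f11 x ≠ 0 ∨ f12 x ≠ 0 ∨ f22 x ≠ 0) := by
  constructor
  · intro k x
    have hz : ∀ y : ℝ × ℝ,
        u1 ^ 2 * f11 y + 2 * u1 * u2 * f12 y + u2 ^ 2 * f22 y = 0 := by
      intro y; rw [hf11, hf12, hf22]; ring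
    have hz' : ∀ y : ℝ × ℝ,
        u1 ^ 2 * f11 y - 2 * u1 * u2 * f12 y + u2 ^ 2 * f22 y = 0 := by
      intro y; rw [hf11, hf12, hf22]; ring
    simp only [VlineLk, Pi.add_apply, Xmom, hz, hz', mul_zero, integral_zero, add_zero]
  · rintro ⟨x, hx⟩
    exact ⟨x, Or.inl (by rw [hf11]; positivity)⟩
end
end
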